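/- arXiv:2206.01196 — 2 statements merged into one kernel-verified Lean document; each statement's English description precedes it below -/
import Mathlib

section
/- Ricci curvature of a Hessian metric: at every point of N one has Ric_{ij} = (1/4) g^{pq} g^{mn} (u_{,ipm} u_{,jqn} − u_{,ijp} u_{,qmn}). -/
open scoped BigOperators
noncomputable section

namespace KRS

variable {n : ℕ}

/-- Partial derivative of `f` in the `i`-th coordinate direction. -/
def pd (i : Fin n) (f : (Fin n → ℝ) → ℝ) : (Fin n → ℝ) → ℝ :=
  fun x => fderiv ℝ f x (Pi.single i 1)

/-- The Hessian matrix `g(x)` of `u`, with entries `g_{ij} = ∂²u/∂x^i∂x^j`. -/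
def hessian (u : (Fin n → ℝ) → ℝ) (x : Fin n → ℝ) : Matrix (Fin n) (Fin n) ℝ :=
  Matrix.of fun i j => pd i (pd j u) x

/-- The inverse matrix `g(x)⁻¹`, with entries `g^{ij}`. -/
def ginv (u : (Fin n → ℝ) → ℝ) (x : Fin n → ℝ) : Matrix (Fin n) (Fin n) ℝ :=
  (hessian u x)⁻¹

/-- Third iterated partial derivative `u_{,ijk}`. -/
def d3 (u : (Fin n → ℝ) → ℝ) (i j k : Fin n) : (Fin n → ℝ) → ℝ :=
  pd i (pd j (pd k u))

/-- Fourth iterated partial derivative `u_{,ijkl}`. -/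
def d4 (u : (Fin n → ℝ) → ℝ) (i j k l : Fin n) : (Fin n → ℝ) → ℝ :=
  pd i (pd j (pd k (pd l u)))

/-- Christoffel symbols `Γ^k_{ij} = (1/2) g^{kl}(∂_i g_{jl} + ∂_j g_{il} − ∂_l g_{ij})`. -/
def Christoffel (u : (Fin n → ℝ) → ℝ) (k i j : Fin n) : (Fin n → ℝ) → ℝ :=
  fun x => (1/2) * ∑ l, ginv u x k l * (d3 u i j l x + d3 u j i l x - d3 u l i j x)

/-- Riemann curvature tensor
`Rm_{ijkl} = g_{is}(∂_k Γ^s_{lj} − ∂_l Γ^s_{kj} + Γ^s_{kp} Γ^p_{lj} − Γ^s_{lp} Γ^p_{kj})`. -/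
def Rm (u : (Fin n → ℝ) → ℝ) (i j k l : Fin n) : (Fin n → ℝ) → ℝ :=
  fun x => ∑ s, hessian u x i s *
    (pd k (Christoffel u s l j) x - pd l (Christoffel u s k j) x
      + ∑ p, Christoffel u s k p x * Christoffel u p l j x
      - ∑ p, Christoffel u s l p x * Christoffel u p k j x)

/-- Ricci tensor `Ric_{ij} = ∂_k Γ^k_{ij} − ∂_j Γ^k_{ik} + Γ^k_{kp} Γ^p_{ij} − Γ^k_{jp} Γ^p_{ik}`. -/
def Ricci (u : (Fin n → ℝ) → ℝ) (i j : Fin n) : (Fin n → ℝ) → ℝ :=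
  fun x => (∑ k, pd k (Christoffel u k i j) x) - (∑ k, pd j (Christoffel u k i k) x)
    + (∑ k, ∑ p, Christoffel u k k p x * Christoffel u p i j x)
    - (∑ k, ∑ p, Christoffel u k j p x * Christoffel u p i k x)

/-- Scalar curvature `s = g^{ij} Ric_{ij}`. -/
def scalarCurv (u : (Fin n → ℝ) → ℝ) : (Fin n → ℝ) → ℝ :=
  fun x => ∑ i, ∑ j, ginv u x i j * Ricci u i j x

/-- Covariant Hessian `(∇²φ)_{ij} = φ_{,ij} − Γ^k_{ij} φ_{,k}`. -/
def covHess (u φ : (Fin n → ℝ) → ℝ) (i j : Fin n) : (Fin n → ℝ) → ℝ :=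
  fun x => pd i (pd j φ) x - ∑ k, Christoffel u k i j x * pd k φ x

/-- Laplace–Beltrami operator `Δφ = g^{ij} (∇²φ)_{ij}`. -/
def laplacian (u φ : (Fin n → ℝ) → ℝ) : (Fin n → ℝ) → ℝ :=
  fun x => ∑ i, ∑ j, ginv u x i j * covHess u φ i j x

/-- Weighted (drift) Laplacian `Δ_φ F = ΔF − g^{ij} φ_{,i} F_{,j}`. -/
def driftLap (u φ F : (Fin n → ℝ) → ℝ) : (Fin n → ℝ) → ℝ :=
  fun x => laplacian u F x - ∑ i, ∑ j, ginv u x i j * pd i φ x * pd j F x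

/-- Bakry–Émery Ricci tensor `(Ric_φ)_{ij} = Ric_{ij} + (∇²φ)_{ij}`. -/
def ricciPhi (u φ : (Fin n → ℝ) → ℝ) (i j : Fin n) : (Fin n → ℝ) → ℝ :=
  fun x => Ricci u i j x + covHess u φ i j x

/-- Pointwise squared `g`-norm of the third derivative tensor:
`|u_{,ijk}|²_g = g^{ip} g^{jq} g^{kr} u_{,ijk} u_{,pqr}`. -/
def norm3 (u : (Fin n → ℝ) → ℝ) : (Fin n → ℝ) → ℝ :=
  fun x => ∑ i, ∑ j, ∑ k, ∑ p, ∑ q, ∑ r,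
    ginv u x i p * ginv u x j q * ginv u x k r * d3 u i j k x * d3 u p q r x

/-- The canonical weight function `φ = (1/2)(u_{,p} ξ^p + v_q x^q)`. -/
def weight (u : (Fin n → ℝ) → ℝ) (ξ v : Fin n → ℝ) : (Fin n → ℝ) → ℝ :=
  fun x => (1/2) * ((∑ p, pd p u x * ξ p) + ∑ q, v q * x q)

/-- `u` solves the weighted Monge–Ampère equation
`log det g(x) = −v_p x^p + u_{,q}(x) ξ^q + c` on `N`. -/
def MAeq (u : (Fin n → ℝ) → ℝ) (N : Set (Fin n → ℝ)) (v ξ : Fin n → ℝ) (c : ℝ) : Prop :=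
  ∀ x ∈ N, Real.log (hessian u x).det = -(∑ p, v p * x p) + (∑ q, pd q u x * ξ q) + c

/-- Covariant derivative of the third derivative tensor:
`(∇T)_{lijk} = u_{,ijkl} − Γ^s_{li} u_{,sjk} − Γ^s_{lj} u_{,isk} − Γ^s_{lk} u_{,ijs}`. -/
def covT (u : (Fin n → ℝ) → ℝ) (l i j k : Fin n) : (Fin n → ℝ) → ℝ :=
  fun x => d4 u i j k l x - (∑ s, Christoffel u s l i x * d3 u s j k x)
    - (∑ s, Christoffel u s l j x * d3 u i s k x)
    - (∑ s, Christoffel u s l k x * d3 u i j s x)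

/-- Completeness of the Hessian metric `g = D²u` on `N`: every C¹ curve
`γ : [0,1) → N` that eventually leaves every compact subset of `N`
has infinite `g`-length. -/
def HessComplete (u : (Fin n → ℝ) → ℝ) (N : Set (Fin n → ℝ)) : Prop :=
  ∀ γ : ℝ → (Fin n → ℝ),
    ContDiffOn ℝ 1 γ (Set.Ico (0:ℝ) 1) →
    (∀ t ∈ Set.Ico (0:ℝ) 1, γ t ∈ N) →
    (∀ K : Set (Fin n → ℝ), IsCompact K → K ⊆ N →
      ∃ tK ∈ Set.Ico (0:ℝ) 1, ∀ t ∈ Set.Ioo tK 1, γ t ∉ K) →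
    ∫⁻ t in Set.Ioo (0:ℝ) 1,
      ENNReal.ofReal (Real.sqrt (∑ i, ∑ j,
        hessian u (γ t) i j * deriv γ t i * deriv γ t j)) = ⊤



/-! ### Auxiliary lemmas -/

section Aux

variable {N : Set (Fin n → ℝ)}

theorem pd_congr_nhds {f g : (Fin n → ℝ) → ℝ} {x : Fin n → ℝ} (h : f =ᶠ[nhds x] g) (i : Fin n) :
    pd i f x = pd i g x := by
  unfold pd
  rw [Filter.EventuallyEq.fderiv_eq h]

theorem pd_congrN (hN : IsOpen N) {f g : (Fin n → ℝ) → ℝ} (h : ∀ y ∈ N, f y = g y)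
    {x : Fin n → ℝ} (hx : x ∈ N) (i : Fin n) : pd i f x = pd i g x :=
  pd_congr_nhds (Filter.eventuallyEq_of_mem (hN.mem_nhds hx) h) i

theorem contDiffOn_pd (hN : IsOpen N) {f : (Fin n → ℝ) → ℝ} (hf : ContDiffOn ℝ (⊤ : ℕ∞) f N)
    (i : Fin n) : ContDiffOn ℝ (⊤ : ℕ∞) (pd i f) N :=
  (hf.fderiv_of_isOpen hN (by simp)).clm_apply contDiffOn_const

theorem diffOnAt {F : Type*} [NormedAddCommGroup F] [NormedSpace ℝ F]
    (hN : IsOpen N) {f : (Fin n → ℝ) → F} (hf : ContDiffOn ℝ (⊤ : ℕ∞) f N)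
    {x : Fin n → ℝ} (hx : x ∈ N) : DifferentiableAt ℝ f x :=
  (hf.contDiffAt (hN.mem_nhds hx)).differentiableAt (by simp)

theorem pd_symm (hN : IsOpen N) {f : (Fin n → ℝ) → ℝ} (hf : ContDiffOn ℝ (⊤ : ℕ∞) f N)
    {x : Fin n → ℝ} (hx : x ∈ N) (a b : Fin n) :
    pd a (pd b f) x = pd b (pd a f) x := by
  have hf' : ContDiffOn ℝ (⊤ : ℕ∞) (fun y => fderiv ℝ f y) N := hf.fderiv_of_isOpen hN (by simp)
  have hdiff : DifferentiableAt ℝ (fun y => fderiv ℝ f y) x := diffOnAt hN hf' hx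
  set D := fderiv ℝ (fun y => fderiv ℝ f y) x with hD
  have key : ∀ v : Fin n → ℝ, HasFDerivAt (fun y => fderiv ℝ f y v)
      ((ContinuousLinearMap.apply ℝ ℝ v).comp D) x :=
    fun v => (ContinuousLinearMap.apply ℝ ℝ v).hasFDerivAt.comp x hdiff.hasFDerivAt
  have hsymm : ∀ v w, D v w = D w v := by
    refine second_derivative_symmetric_of_eventually (f := f) ?_ hdiff.hasFDerivAt
    filter_upwards [hN.mem_nhds hx] with y hy using (diffOnAt hN hf hy).hasFDerivAt
  have h1 : ∀ v w : Fin n, pd v (pd w f) x = D (Pi.single v 1) (Pi.single w 1) := by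
    intro v w
    show fderiv ℝ (fun y => fderiv ℝ f y (Pi.single w 1)) x (Pi.single v 1) = _
    rw [(key (Pi.single w 1)).fderiv]
    rfl
  rw [h1, h1, hsymm]

theorem pd_const {c : ℝ} {x : Fin n → ℝ} (i : Fin n) : pd i (fun _ => c) x = 0 := by
  simp [pd]

theorem pd_const_mul {f : (Fin n → ℝ) → ℝ} {x : Fin n → ℝ} (hf : DifferentiableAt ℝ f x)
    (c : ℝ) (i : Fin n) : pd i (fun y => c * f y) x = c * pd i f x := by
  unfold pd; rw [fderiv_const_mul hf]; simp

theorem pd_mul {f g : (Fin n → ℝ) → ℝ} {x : Fin n → ℝ} (hf : DifferentiableAt ℝ f x)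
    (hg : DifferentiableAt ℝ g x) (i : Fin n) :
    pd i (fun y => f y * g y) x = pd i f x * g x + f x * pd i g x := by
  unfold pd; rw [fderiv_fun_mul hf hg]
  simp only [ContinuousLinearMap.add_apply, ContinuousLinearMap.smul_apply, smul_eq_mul]
  ring

theorem pd_sum {ι : Type*} {s : Finset ι} {f : ι → (Fin n → ℝ) → ℝ} {x : Fin n → ℝ}
    (h : ∀ k ∈ s, DifferentiableAt ℝ (f k) x) (i : Fin n) :
    pd i (fun y => ∑ k ∈ s, f k y) x = ∑ k ∈ s, pd i (f k) x := by
  unfold pd; rw [fderiv_fun_sum h]; simp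

section Smooth

variable (hN : IsOpen N) {u : (Fin n → ℝ) → ℝ} (hu : ContDiffOn ℝ (⊤ : ℕ∞) u N)
include hN hu

theorem contDiffOn_hess (a b : Fin n) :
    ContDiffOn ℝ (⊤ : ℕ∞) (fun y => hessian u y a b) N :=
  contDiffOn_pd hN (contDiffOn_pd hN hu b) a

theorem contDiffOn_det : ContDiffOn ℝ (⊤ : ℕ∞) (fun y => (hessian u y).det) N := by
  have h : ContDiffOn ℝ (⊤ : ℕ∞) (fun y => ∑ σ : Equiv.Perm (Fin n),
      ((Equiv.Perm.sign σ : ℤ) : ℝ) * ∏ i, hessian u y (σ i) i) N := by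
    refine ContDiffOn.sum fun σ _ => ContDiffOn.mul contDiffOn_const ?_
    exact contDiffOn_prod fun i _ => contDiffOn_hess hN hu (σ i) i
  exact h.congr fun y _ => Matrix.det_apply' _

theorem contDiffOn_adj (a b : Fin n) :
    ContDiffOn ℝ (⊤ : ℕ∞) (fun y => (hessian u y).adjugate a b) N := by
  have h : ContDiffOn ℝ (⊤ : ℕ∞) (fun y => ∑ σ : Equiv.Perm (Fin n),
      ((Equiv.Perm.sign σ : ℤ) : ℝ) *
        ∏ k, ((hessian u y).updateRow b (Pi.single a 1)) (σ k) k) N := by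
    refine ContDiffOn.sum fun σ _ => ContDiffOn.mul contDiffOn_const ?_
    refine contDiffOn_prod fun k _ => ?_
    by_cases hk : σ k = b
    · simp only [Matrix.updateRow_apply, hk, if_pos rfl]
      exact contDiffOn_const
    · simp only [Matrix.updateRow_apply, if_neg hk]
      exact contDiffOn_hess hN hu (σ k) k
  exact h.congr fun y _ => by rw [Matrix.adjugate_apply, Matrix.det_apply']

theorem contDiffOn_ginv (hdet : ∀ y ∈ N, (hessian u y).det ≠ 0) (a b : Fin n) :
    ContDiffOn ℝ (⊤ : ℕ∞) (fun y => ginv u y a b) N := by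
  have h : ContDiffOn ℝ (⊤ : ℕ∞)
      (fun y => ((hessian u y).det)⁻¹ * (hessian u y).adjugate a b) N :=
    ((contDiffOn_det hN hu).inv hdet).mul (contDiffOn_adj hN hu a b)
  refine h.congr fun y _ => ?_
  show (hessian u y)⁻¹ a b = _
  rw [Matrix.inv_def, Matrix.smul_apply, Ring.inverse_eq_inv', smul_eq_mul]

end Smooth

end Aux

/-! ### The purely algebraic part -/

theorem sum4_flat (F : Fin n → Fin n → Fin n → Fin n → ℝ) :
    (∑ a, ∑ b, ∑ c, ∑ d, F a b c d)
      = ∑ t : Fin n × Fin n × Fin n × Fin n, F t.1 t.2.1 t.2.2.1 t.2.2.2 := by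
  simp [Fintype.sum_prod_type]

/-- swap `(a,b,c,d) ↦ (a,d,c,b)` -/
def e₁ : (Fin n × Fin n × Fin n × Fin n) ≃ (Fin n × Fin n × Fin n × Fin n) :=
  ⟨fun t => (t.1, t.2.2.2, t.2.2.1, t.2.1), fun t => (t.1, t.2.2.2, t.2.2.1, t.2.1),
    fun _ => rfl, fun _ => rfl⟩

/-- swap `(a,b,c,d) ↦ (a,c,b,d)` -/
def e₂ : (Fin n × Fin n × Fin n × Fin n) ≃ (Fin n × Fin n × Fin n × Fin n) :=
  ⟨fun t => (t.1, t.2.2.1, t.2.1, t.2.2.2), fun t => (t.1, t.2.2.1, t.2.1, t.2.2.2),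
    fun _ => rfl, fun _ => rfl⟩

/-- `(a,b,c,d) ↦ (b,d,a,c)`, with inverse `(a,b,c,d) ↦ (c,a,d,b)` -/
def e₃ : (Fin n × Fin n × Fin n × Fin n) ≃ (Fin n × Fin n × Fin n × Fin n) :=
  ⟨fun t => (t.2.1, t.2.2.2, t.1, t.2.2.1), fun t => (t.2.2.1, t.1, t.2.2.2, t.2.1),
    fun _ => rfl, fun _ => rfl⟩

theorem key_algebra (H : Fin n → Fin n → ℝ) (T : Fin n → Fin n → Fin n → ℝ)
    (Q : Fin n → Fin n → Fin n → Fin n → ℝ)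
    (Hs : ∀ a b, H a b = H b a)
    (Ts12 : ∀ a b c, T a b c = T b a c)
    (Ts23 : ∀ a b c, T a b c = T a c b)
    (Qs : ∀ a b c d, Q a b c d = Q c b a d)
    (i j : Fin n) :
    (∑ k, ((1:ℝ)/2) * ∑ l, ((-∑ p, ∑ q, H k p * T k p q * H q l) * T i j l
        + H k l * Q k i j l))
      - (∑ k, (1/2) * ∑ l, ((-∑ p, ∑ q, H k p * T j p q * H q l) * T i k l
        + H k l * Q j i k l))
      + (∑ k, ∑ p, ((1/2) * ∑ a, H k a * T k p a) * ((1/2) * ∑ b, H p b * T i j b))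
      - (∑ k, ∑ p, ((1/2) * ∑ a, H k a * T j p a) * ((1/2) * ∑ b, H p b * T i k b))
    = (1/4) * ∑ p, ∑ q, ∑ m, ∑ m', H p q * H m m' *
        (T i p m * T j q m' - T i j p * T q m m') := by
  -- canonical flattened sums
  set A : ℝ := ∑ k, ∑ l, ∑ p, ∑ q, H k p * T k p q * H q l * T i j l with hA
  set B : ℝ := ∑ k, ∑ l, ∑ p, ∑ q, H k p * T j p q * H q l * T i k l with hB
  set QQ : ℝ := ∑ k, ∑ l, H k l * Q k i j l with hQQ
  have h1 : (∑ k, ((1:ℝ)/2) * ∑ l, ((-∑ p, ∑ q, H k p * T k p q * H q l) * T i j l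
      + H k l * Q k i j l)) = -(1/2) * A + (1/2) * QQ := by
    rw [hA, hQQ]
    simp only [neg_mul, Finset.sum_add_distrib, Finset.sum_neg_distrib, Finset.sum_mul,
      mul_add, ← Finset.mul_sum, mul_neg]
  have h2 : (∑ k, ((1:ℝ)/2) * ∑ l, ((-∑ p, ∑ q, H k p * T j p q * H q l) * T i k l
      + H k l * Q j i k l)) = -(1/2) * B + (1/2) * QQ := by
    rw [hB, hQQ]
    have hq : (∑ k, ∑ l, H k l * Q j i k l) = ∑ k, ∑ l, H k l * Q k i j l :=
      Finset.sum_congr rfl fun k _ => Finset.sum_congr rfl fun l _ => by rw [Qs j i k l]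
    rw [← hq]
    simp only [neg_mul, Finset.sum_add_distrib, Finset.sum_neg_distrib, Finset.sum_mul,
      mul_add, ← Finset.mul_sum, mul_neg]
  have h3 : (∑ k, ∑ p, ((1:ℝ)/2 * ∑ a, H k a * T k p a) * ((1/2) * ∑ b, H p b * T i j b))
      = (1/4) * A := by
    have step : ∀ k p : Fin n, ((1:ℝ)/2 * ∑ a, H k a * T k p a)
        * ((1/2) * ∑ b, H p b * T i j b)
        = ∑ a, ∑ b, (1/4:ℝ) * (H k a * T k p a * (H p b * T i j b)) := by
      intro k p
      rw [show ((1:ℝ)/2 * ∑ a, H k a * T k p a) * ((1/2) * ∑ b, H p b * T i j b)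
          = (1/4) * ((∑ a, H k a * T k p a) * (∑ b, H p b * T i j b)) by ring,
        Finset.sum_mul_sum]
      simp only [Finset.mul_sum]
    rw [Finset.sum_congr rfl fun k _ => Finset.sum_congr rfl fun p _ => step k p, hA]
    rw [show ((1:ℝ)/4) * (∑ k, ∑ l, ∑ p, ∑ q, H k p * T k p q * H q l * T i j l)
        = ∑ k, ∑ l, ∑ p, ∑ q, (1/4:ℝ) * (H k p * T k p q * H q l * T i j l) by
      simp only [Finset.mul_sum]]
    rw [sum4_flat (fun k p a b => (1/4:ℝ) * (H k a * T k p a * (H p b * T i j b))),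
      sum4_flat (fun k l p q => (1/4:ℝ) * (H k p * T k p q * H q l * T i j l))]
    refine Fintype.sum_equiv e₁ _ _ fun t => ?_
    obtain ⟨k, p, a, b⟩ := t
    show (1/4:ℝ) * (H k a * T k p a * (H p b * T i j b))
        = (1/4) * (H k a * T k a p * H p b * T i j b)
    rw [Ts23 k a p]; ring
  have h4 : (∑ k, ∑ p, ((1:ℝ)/2 * ∑ a, H k a * T j p a) * ((1/2) * ∑ b, H p b * T i k b))
      = (1/4) * B := by
    have step : ∀ k p : Fin n, ((1:ℝ)/2 * ∑ a, H k a * T j p a)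
        * ((1/2) * ∑ b, H p b * T i k b)
        = ∑ a, ∑ b, (1/4:ℝ) * (H k a * T j p a * (H p b * T i k b)) := by
      intro k p
      rw [show ((1:ℝ)/2 * ∑ a, H k a * T j p a) * ((1/2) * ∑ b, H p b * T i k b)
          = (1/4) * ((∑ a, H k a * T j p a) * (∑ b, H p b * T i k b)) by ring,
        Finset.sum_mul_sum]
      simp only [Finset.mul_sum]
    rw [Finset.sum_congr rfl fun k _ => Finset.sum_congr rfl fun p _ => step k p, hB]
    rw [show ((1:ℝ)/4) * (∑ k, ∑ l, ∑ p, ∑ q, H k p * T j p q * H q l * T i k l)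
        = ∑ k, ∑ l, ∑ p, ∑ q, (1/4:ℝ) * (H k p * T j p q * H q l * T i k l) by
      simp only [Finset.mul_sum]]
    rw [sum4_flat (fun k p a b => (1/4:ℝ) * (H k a * T j p a * (H p b * T i k b))),
      sum4_flat (fun k l p q => (1/4:ℝ) * (H k p * T j p q * H q l * T i k l))]
    refine Fintype.sum_equiv e₁ _ _ fun t => ?_
    obtain ⟨k, p, a, b⟩ := t
    show (1/4:ℝ) * (H k a * T j p a * (H p b * T i k b))
        = (1/4) * (H k a * T j a p * H p b * T i k b)
    rw [Ts23 j a p]; ring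
  have hR : (∑ p, ∑ q, ∑ m, ∑ m', H p q * H m m' *
      (T i p m * T j q m' - T i j p * T q m m')) = B - A := by
    have hsplit : (∑ p, ∑ q, ∑ m, ∑ m', H p q * H m m' *
        (T i p m * T j q m' - T i j p * T q m m'))
        = (∑ p, ∑ q, ∑ m, ∑ m', H p q * H m m' * (T i p m * T j q m'))
          - ∑ p, ∑ q, ∑ m, ∑ m', H p q * H m m' * (T i j p * T q m m') := by
      simp only [mul_sub, Finset.sum_sub_distrib]
    rw [hsplit]
    have hBeq : (∑ p, ∑ q, ∑ m, ∑ m', H p q * H m m' * (T i p m * T j q m')) = B := by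
      rw [hB, sum4_flat, sum4_flat (fun k l p q => H k p * T j p q * H q l * T i k l)]
      refine (Fintype.sum_equiv e₂ _ _ fun t => ?_).symm
      obtain ⟨k, l, p, q⟩ := t
      show H k p * T j p q * H q l * T i k l = H k p * H l q * (T i k l * T j p q)
      rw [Hs q l]; ring
    have hAeq : (∑ p, ∑ q, ∑ m, ∑ m', H p q * H m m' * (T i j p * T q m m')) = A := by
      rw [hA, sum4_flat, sum4_flat (fun k l p q => H k p * T k p q * H q l * T i j l)]
      refine (Fintype.sum_equiv e₃ _ _ fun t => ?_).symm
      obtain ⟨k, l, p, q⟩ := t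
      show H k p * T k p q * H q l * T i j l = H l q * H k p * (T i j l * T q k p)
      rw [Hs q l, Ts12 q k p, Ts23 k q p]; ring
    rw [hBeq, hAeq]
  rw [h1, h2, h3, h4, hR]
  ring


/-! ### Main theorem -/

theorem ricci_of_hessian_metric {n : ℕ} (hn : 1 ≤ n) (N : Set (Fin n → ℝ)) (hNopen : IsOpen N)
    (hNne : N.Nonempty) (u : (Fin n → ℝ) → ℝ) (hu : ContDiffOn ℝ (⊤ : ℕ∞) u N)
    (hpos : ∀ x ∈ N, (hessian u x).PosDef) :
    ∀ x ∈ N, ∀ i j : Fin n,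
      Ricci u i j x = (1/4) * ∑ p, ∑ q, ∑ m, ∑ m', ginv u x p q * ginv u x m m' *
        (d3 u i p m x * d3 u j q m' x - d3 u i j p x * d3 u q m m' x) := by
  intro x hx i j
  have hdet : ∀ y ∈ N, (hessian u y).det ≠ 0 := fun y hy => (hpos y hy).det_pos.ne'
  have hdet' : ∀ y ∈ N, IsUnit (hessian u y).det := fun y hy => (hdet y hy).isUnit
  have cd1 : ∀ a, ContDiffOn ℝ (⊤ : ℕ∞) (pd a u) N := fun a => contDiffOn_pd hNopen hu a
  have cd2 : ∀ a b, ContDiffOn ℝ (⊤ : ℕ∞) (pd a (pd b u)) N := fun a b =>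
    contDiffOn_pd hNopen (cd1 b) a
  have cd3 : ∀ a b c, ContDiffOn ℝ (⊤ : ℕ∞) (d3 u a b c) N := fun a b c =>
    contDiffOn_pd hNopen (cd2 b c) a
  have dg : ∀ a b, ∀ y ∈ N, DifferentiableAt ℝ (fun z => ginv u z a b) y :=
    fun a b y hy => diffOnAt hNopen (contDiffOn_ginv hNopen hu hdet a b) hy
  have dd3 : ∀ a b c, ∀ y ∈ N, DifferentiableAt ℝ (d3 u a b c) y := fun a b c y hy =>
    diffOnAt hNopen (cd3 a b c) hy
  -- symmetries of third and fourth derivatives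
  have T12 : ∀ a b c, ∀ y ∈ N, d3 u a b c y = d3 u b a c y := fun a b c y hy =>
    pd_symm hNopen (cd1 c) hy a b
  have T23 : ∀ a b c, ∀ y ∈ N, d3 u a b c y = d3 u a c b y := fun a b c y hy =>
    pd_congrN hNopen (fun z hz => pd_symm hNopen hu hz b c) hy a
  have Q12 : ∀ a b c d, ∀ y ∈ N, d4 u a b c d y = d4 u b a c d y := fun a b c d y hy =>
    pd_symm hNopen (cd2 c d) hy a b
  have Q23 : ∀ a b c d, ∀ y ∈ N, d4 u a b c d y = d4 u a c b d y := fun a b c d y hy =>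
    pd_congrN hNopen (fun z hz => pd_symm hNopen (cd1 d) hz b c) hy a
  have Qs : ∀ a b c d, d4 u a b c d x = d4 u c b a d x := fun a b c d => by
    rw [Q12 a b c d x hx, Q23 b a c d x hx, Q12 b c a d x hx]
  -- symmetry of the inverse Hessian
  have Hs : ∀ a b, ginv u x a b = ginv u x b a := by
    have hsy : (hessian u x).transpose = hessian u x := by
      ext a b
      show hessian u x b a = hessian u x a b
      exact pd_symm hNopen hu hx b a
    intro a b
    show (hessian u x)⁻¹ a b = (hessian u x)⁻¹ b a
    conv_lhs => rw [← hsy, ← Matrix.transpose_nonsing_inv]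
    rfl
  -- Kronecker identities
  have hKron1 : ∀ a b, (∑ l, hessian u x a l * ginv u x l b)
      = if a = b then (1:ℝ) else 0 := by
    intro a b
    rw [show (∑ l, hessian u x a l * ginv u x l b) = (hessian u x * ginv u x) a b from
      (Matrix.mul_apply).symm,
      show hessian u x * ginv u x = 1 from Matrix.mul_nonsing_inv _ (hdet' x hx)]
    exact Matrix.one_apply
  -- derivative of the inverse Hessian
  have hpdginv : ∀ m k b : Fin n, pd m (fun y => ginv u y k b) x
      = -∑ a, ∑ l, ginv u x k a * d3 u m a l x * ginv u x l b := by
    intro m k b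
    have hzero : ∀ l : Fin n, (∑ a, pd m (fun y => ginv u y k a) x * hessian u x a l)
        + (∑ a, ginv u x k a * d3 u m a l x) = 0 := by
      intro l
      have hconst : ∀ y ∈ N, (∑ a, ginv u y k a * hessian u y a l)
          = (fun _ : Fin n → ℝ => if k = l then (1:ℝ) else 0) y := by
        intro y hy
        show _ = if k = l then (1:ℝ) else 0
        rw [show (∑ a, ginv u y k a * hessian u y a l) = (ginv u y * hessian u y) k l from
          (Matrix.mul_apply).symm,
          show ginv u y * hessian u y = 1 from Matrix.nonsing_inv_mul _ (hdet' y hy)]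
        exact Matrix.one_apply
      have h0 : pd m (fun y => ∑ a, ginv u y k a * hessian u y a l) x = 0 := by
        rw [pd_congrN hNopen hconst hx m, pd_const]
      rw [pd_sum (f := fun a => fun y => ginv u y k a * hessian u y a l)
        (fun a _ => ((dg k a x hx).mul (diffOnAt hNopen (cd2 a l) hx))) m] at h0
      have hterm : ∀ a : Fin n, pd m (fun y => ginv u y k a * hessian u y a l) x
          = pd m (fun y => ginv u y k a) x * hessian u x a l
            + ginv u x k a * d3 u m a l x :=
        fun a => pd_mul (dg k a x hx) (diffOnAt hNopen (cd2 a l) hx) m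
      rw [Finset.sum_congr rfl fun a _ => hterm a, Finset.sum_add_distrib] at h0
      exact h0
    have heq1 : ∀ l : Fin n, (∑ a, pd m (fun y => ginv u y k a) x * hessian u x a l)
        = -∑ a, ginv u x k a * d3 u m a l x := fun l => by linarith [hzero l]
    have hstart : (∑ a, pd m (fun y => ginv u y k a) x * (if a = b then (1:ℝ) else 0))
        = pd m (fun y => ginv u y k b) x := by
      simp [mul_ite]
    calc pd m (fun y => ginv u y k b) x
        = ∑ a, pd m (fun y => ginv u y k a) x * (if a = b then (1:ℝ) else 0) :=
          hstart.symm
      _ = ∑ a, pd m (fun y => ginv u y k a) x * (∑ l, hessian u x a l * ginv u x l b) :=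
          Finset.sum_congr rfl fun a _ => by rw [hKron1 a b]
      _ = ∑ a, ∑ l, pd m (fun y => ginv u y k a) x * (hessian u x a l * ginv u x l b) := by
          simp only [Finset.mul_sum]
      _ = ∑ l, (∑ a, pd m (fun y => ginv u y k a) x * hessian u x a l) * ginv u x l b := by
          rw [Finset.sum_comm]
          refine Finset.sum_congr rfl fun l _ => ?_
          rw [Finset.sum_mul]
          exact Finset.sum_congr rfl fun a _ => by ring
      _ = ∑ l, (-∑ a, ginv u x k a * d3 u m a l x) * ginv u x l b :=
          Finset.sum_congr rfl fun l _ => by rw [heq1 l]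
      _ = -∑ l, ∑ a, ginv u x k a * d3 u m a l x * ginv u x l b := by
          simp only [neg_mul, Finset.sum_neg_distrib, Finset.sum_mul]
      _ = -∑ a, ∑ l, ginv u x k a * d3 u m a l x * ginv u x l b := by
          rw [Finset.sum_comm]
  -- simplified form of the Christoffel symbols on N
  have hC : ∀ (k a b : Fin n), ∀ y ∈ N, Christoffel u k a b y
      = (1/2) * ∑ l, ginv u y k l * d3 u a b l y := by
    intro k a b y hy
    unfold Christoffel
    congr 1
    refine Finset.sum_congr rfl fun l _ => ?_
    have e1 : d3 u b a l y = d3 u a b l y := (T12 a b l y hy).symm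
    have e2 : d3 u l a b y = d3 u a b l y := by
      rw [T12 l a b y hy, T23 a l b y hy]
    rw [e1, e2]; ring
  -- derivative of the Christoffel symbols
  have hpdC : ∀ (m k a b : Fin n), pd m (Christoffel u k a b) x
      = (1/2) * ∑ l, ((-∑ p, ∑ q, ginv u x k p * d3 u m p q x * ginv u x q l) * d3 u a b l x
        + ginv u x k l * d4 u m a b l x) := by
    intro m k a b
    rw [pd_congrN hNopen (hC k a b) hx m]
    rw [pd_const_mul (DifferentiableAt.fun_sum fun l _ =>
      (dg k l x hx).fun_mul (dd3 a b l x hx)) (1/2) m]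
    congr 1
    rw [pd_sum (fun l _ => (dg k l x hx).fun_mul (dd3 a b l x hx)) m]
    refine Finset.sum_congr rfl fun l _ => ?_
    have hd4 : pd m (d3 u a b l) x = d4 u m a b l x := rfl
    rw [pd_mul (dg k l x hx) (dd3 a b l x hx) m, hpdginv m k l, hd4]
  -- assemble
  show (∑ k, pd k (Christoffel u k i j) x) - (∑ k, pd j (Christoffel u k i k) x)
      + (∑ k, ∑ p, Christoffel u k k p x * Christoffel u p i j x)
      - (∑ k, ∑ p, Christoffel u k j p x * Christoffel u p i k x) = _
  have h3' : (∑ k, ∑ p, Christoffel u k k p x * Christoffel u p i j x)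
      = ∑ k, ∑ p, ((1/2) * ∑ l, ginv u x k l * d3 u k p l x)
        * ((1/2) * ∑ l, ginv u x p l * d3 u i j l x) :=
    Finset.sum_congr rfl fun k _ => Finset.sum_congr rfl fun p _ => by
      rw [hC k k p x hx, hC p i j x hx]
  have h4' : (∑ k, ∑ p, Christoffel u k j p x * Christoffel u p i k x)
      = ∑ k, ∑ p, ((1/2) * ∑ l, ginv u x k l * d3 u j p l x)
        * ((1/2) * ∑ l, ginv u x p l * d3 u i k l x) :=
    Finset.sum_congr rfl fun k _ => Finset.sum_congr rfl fun p _ => by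
      rw [hC k j p x hx, hC p i k x hx]
  rw [Finset.sum_congr rfl fun k _ => hpdC k k i j,
    Finset.sum_congr rfl fun k _ => hpdC j k i k, h3', h4']
  exact key_algebra (fun a b => ginv u x a b) (fun a b c => d3 u a b c x)
    (fun a b c d => d4 u a b c d x) Hs (fun a b c => T12 a b c x hx)
    (fun a b c => T23 a b c x hx) Qs i j

end KRS
end
end

section
/- Laplace–Beltrami operator of a Monge–Ampère Hessian metric: if u solves the weighted Monge–Ampère equation, then for every smooth function φ : N → ℝ and every point of N one has Δφ = g^{pq} φ_{,pq} − (1/2) ξ^p φ_{,p} + (1/2) g^{pq} v_p φ_{,q}. -/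
open scoped BigOperators
noncomputable section

namespace KRS

variable {n : ℕ}

/-! ### Auxiliary lemmas -/

lemma contDiffAt_pd {f : (Fin n → ℝ) → ℝ} {x} (hf : ContDiffAt ℝ (⊤ : ℕ∞) f x) (i : Fin n) :
    ContDiffAt ℝ (⊤ : ℕ∞) (pd i f) x := by
  have h := hf.fderiv_right (m := (⊤ : ℕ∞)) (by simp)
  exact h.clm_apply contDiffAt_const

lemma pd_congr {f g : (Fin n → ℝ) → ℝ} {x} (h : f =ᶠ[nhds x] g) (i : Fin n) :
    pd i f x = pd i g x := by
  unfold pd; rw [h.fderiv_eq]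

lemma pd_comm {f : (Fin n → ℝ) → ℝ} {x} (hf : ContDiffAt ℝ (⊤ : ℕ∞) f x) (i j : Fin n) :
    pd i (pd j f) x = pd j (pd i f) x := by
  have hd : DifferentiableAt ℝ (fderiv ℝ f) x :=
    (hf.fderiv_right (m := 1) (le_trans (by norm_num) (WithTop.coe_le_coe.mpr (le_top : (2:ℕ∞) ≤ ⊤)))).differentiableAt one_ne_zero
  have key : ∀ a b : Fin n, pd a (pd b f) x
      = fderiv ℝ (fderiv ℝ f) x (Pi.single a 1) (Pi.single b 1) := by
    intro a b
    have h1 : HasFDerivAt (fun y => (fderiv ℝ f y) (Pi.single b 1))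
        ((fderiv ℝ (fderiv ℝ f) x).flip (Pi.single b 1)) x := by
      simpa using hd.hasFDerivAt.clm_apply (hasFDerivAt_const (Pi.single b 1) x)
    exact (congrArg (fun L => L (Pi.single a 1)) h1.fderiv).trans rfl
  rw [key, key, (hf.isSymmSndFDerivAt (by rw [minSmoothness_of_isRCLikeNormedField]; exact WithTop.coe_le_coe.mpr (le_top : (2:ℕ∞) ≤ ⊤))).eq]

lemma sum4_comm (f : Fin n → Fin n → Fin n → Fin n → ℝ) :
    ∑ i, ∑ j, ∑ k, ∑ l, f i j k l = ∑ k, ∑ l, ∑ i, ∑ j, f i j k l := by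
  calc ∑ i, ∑ j, ∑ k, ∑ l, f i j k l
      = ∑ i, ∑ k, ∑ j, ∑ l, f i j k l :=
        Finset.sum_congr rfl fun i _ => Finset.sum_comm
    _ = ∑ k, ∑ i, ∑ j, ∑ l, f i j k l := Finset.sum_comm
    _ = ∑ k, ∑ i, ∑ l, ∑ j, f i j k l :=
        Finset.sum_congr rfl fun k _ => Finset.sum_congr rfl fun i _ => Finset.sum_comm
    _ = ∑ k, ∑ l, ∑ i, ∑ j, f i j k l :=
        Finset.sum_congr rfl fun k _ => Finset.sum_comm

lemma leibniz_dir (M E : Matrix (Fin n) (Fin n) ℝ) :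
    ∑ σ : Equiv.Perm (Fin n), (Equiv.Perm.sign σ : ℝ) *
      ∑ i, (∏ j ∈ Finset.univ.erase i, M (σ j) j) * E (σ i) i
    = ∑ i, ∑ r, M.adjugate i r * E r i := by
  have h1 : ∀ i : Fin n, ∑ r, M.adjugate i r * E r i
      = (M.updateCol i (fun r => E r i)).det := by
    intro i
    rw [← Matrix.cramer_apply, Matrix.cramer_eq_adjugate_mulVec, Matrix.mulVec]
    simp [dotProduct]
  calc ∑ σ : Equiv.Perm (Fin n), (Equiv.Perm.sign σ : ℝ) *
      ∑ i, (∏ j ∈ Finset.univ.erase i, M (σ j) j) * E (σ i) i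
      = ∑ i, ∑ σ : Equiv.Perm (Fin n), (Equiv.Perm.sign σ : ℝ) *
        ((∏ j ∈ Finset.univ.erase i, M (σ j) j) * E (σ i) i) := by
        rw [Finset.sum_comm]
        exact Finset.sum_congr rfl fun σ _ => by rw [Finset.mul_sum]
    _ = ∑ i, (M.updateCol i (fun r => E r i)).det := by
        refine Finset.sum_congr rfl fun i _ => ?_
        rw [Matrix.det_apply]
        refine Finset.sum_congr rfl fun σ _ => ?_
        have : ∏ j, (M.updateCol i (fun r => E r i)) (σ j) j
            = E (σ i) i * ∏ j ∈ Finset.univ.erase i, M (σ j) j := by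
          rw [← Finset.mul_prod_erase Finset.univ _ (Finset.mem_univ i)]
          congr 1
          · simp [Matrix.updateCol_apply]
          · exact Finset.prod_congr rfl fun j hj => by
              simp [Matrix.updateCol_apply, Finset.ne_of_mem_erase hj]
        rw [this]
        rw [Units.smul_def, zsmul_eq_mul]
        ring
    _ = ∑ i, ∑ r, M.adjugate i r * E r i :=
        Finset.sum_congr rfl fun i _ => (h1 i).symm

lemma hasFDerivAt_det_hessian {u : (Fin n → ℝ) → ℝ} {x : Fin n → ℝ}
    (h : ∀ a b : Fin n, DifferentiableAt ℝ (pd a (pd b u)) x) :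
    HasFDerivAt (fun y => (hessian u y).det)
      (∑ σ : Equiv.Perm (Fin n), (Equiv.Perm.sign σ : ℝ) •
        ∑ i, (∏ j ∈ Finset.univ.erase i, hessian u x (σ j) j) •
          fderiv ℝ (pd (σ i) (pd i u)) x) x := by
  have hdet : (fun y => (hessian u y).det)
      = fun y => ∑ σ : Equiv.Perm (Fin n), (Equiv.Perm.sign σ : ℝ) *
          ∏ i, pd (σ i) (pd i u) y := by
    funext y
    rw [Matrix.det_apply]
    refine Finset.sum_congr rfl fun σ _ => ?_
    rw [Units.smul_def, zsmul_eq_mul]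
    rfl
  rw [hdet]
  refine HasFDerivAt.fun_sum fun σ _ => ?_
  have hp : HasFDerivAt (fun y => ∏ i, pd (σ i) (pd i u) y)
      (∑ i, (∏ j ∈ Finset.univ.erase i, pd (σ j) (pd j u) x) •
        fderiv ℝ (pd (σ i) (pd i u)) x) x :=
    HasFDerivAt.finset_prod fun i _ => (h (σ i) i).hasFDerivAt
  simpa [smul_smul, hessian] using hp.const_mul ((Equiv.Perm.sign σ : ℝ))

lemma jacobi {u : (Fin n → ℝ) → ℝ} {N : Set (Fin n → ℝ)} (hNopen : IsOpen N)
    (hu : ContDiffOn ℝ (⊤ : ℕ∞) u N) (hpos : ∀ x ∈ N, (hessian u x).PosDef)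
    {v ξ : Fin n → ℝ} {c : ℝ} (hMA : MAeq u N v ξ c) {x : Fin n → ℝ} (hx : x ∈ N)
    (l : Fin n) :
    ∑ i, ∑ r, (hessian u x)⁻¹ i r * d3 u l r i x
      = -(v l) + ∑ q, hessian u x l q * ξ q := by
  have hu' : ∀ y ∈ N, ContDiffAt ℝ (⊤ : ℕ∞) u y := fun y hy => hu.contDiffAt (hNopen.mem_nhds hy)
  have hent : ∀ a b : Fin n, DifferentiableAt ℝ (pd a (pd b u)) x := fun a b =>
    (contDiffAt_pd (contDiffAt_pd (hu' x hx) b) a).differentiableAt (by simp)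
  have hdetpos : 0 < (hessian u x).det := (hpos x hx).det_pos
  have hf : HasFDerivAt (fun y => -(∑ p, v p * y p) + (∑ q, pd q u y * ξ q) + c)
      (-(∑ p, v p • (ContinuousLinearMap.proj p : (Fin n → ℝ) →L[ℝ] ℝ))
        + (∑ q, ξ q • fderiv ℝ (pd q u) x)) x := by
    have h1 : HasFDerivAt (fun y : Fin n → ℝ => ∑ p, v p * y p)
        (∑ p, v p • (ContinuousLinearMap.proj p : (Fin n → ℝ) →L[ℝ] ℝ)) x :=
      HasFDerivAt.fun_sum fun p _ =>
        ((ContinuousLinearMap.proj p : (Fin n → ℝ) →L[ℝ] ℝ).hasFDerivAt).const_mul (v p)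
    have h2 : HasFDerivAt (fun y => ∑ q, pd q u y * ξ q)
        (∑ q, ξ q • fderiv ℝ (pd q u) x) x :=
      HasFDerivAt.fun_sum fun q _ =>
        ((contDiffAt_pd (hu' x hx) q).differentiableAt (by simp)).hasFDerivAt.mul_const (ξ q)
    exact (h1.neg.add h2).add_const c
  have heq : (fun y => (hessian u y).det)
      =ᶠ[nhds x] fun y => Real.exp (-(∑ p, v p * y p) + (∑ q, pd q u y * ξ q) + c) := by
    filter_upwards [hNopen.mem_nhds hx] with y hy
    rw [← hMA y hy, Real.exp_log (hpos y hy).det_pos]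
  have hD := hasFDerivAt_det_hessian hent
  have hD' := hf.exp.congr_of_eventuallyEq heq
  have hexpfx : Real.exp (-(∑ p, v p * x p) + (∑ q, pd q u x * ξ q) + c)
      = (hessian u x).det := by
    rw [← hMA x hx, Real.exp_log hdetpos]
  have huniq := hD.unique hD'
  have hval := congrArg (fun T : (Fin n → ℝ) →L[ℝ] ℝ => T (Pi.single l 1)) huniq
  simp only [ContinuousLinearMap.sum_apply, ContinuousLinearMap.smul_apply,
    ContinuousLinearMap.add_apply, ContinuousLinearMap.neg_apply,
    ContinuousLinearMap.proj_apply, smul_eq_mul] at hval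
  have hL1 : ∑ σ : Equiv.Perm (Fin n), (Equiv.Perm.sign σ : ℝ) *
      ∑ i, (∏ j ∈ Finset.univ.erase i, hessian u x (σ j) j) *
        (fderiv ℝ (pd (σ i) (pd i u)) x (Pi.single l 1))
      = (hessian u x).det * ∑ i, ∑ r, (hessian u x)⁻¹ i r * d3 u l r i x := by
    have hadj : (hessian u x).adjugate = (hessian u x).det • (hessian u x)⁻¹ := by
      rw [Matrix.inv_def, smul_smul, Ring.inverse_eq_inv', mul_inv_cancel₀ (ne_of_gt hdetpos),
        one_smul]
    have hld := leibniz_dir (hessian u x) (Matrix.of fun r i => d3 u l r i x)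
    simp only [Matrix.of_apply] at hld
    calc _ = ∑ σ : Equiv.Perm (Fin n), (Equiv.Perm.sign σ : ℝ) *
        ∑ i, (∏ j ∈ Finset.univ.erase i, hessian u x (σ j) j) * d3 u l (σ i) i x := rfl
      _ = ∑ i, ∑ r, (hessian u x).adjugate i r * d3 u l r i x := hld
      _ = (hessian u x).det * ∑ i, ∑ r, (hessian u x)⁻¹ i r * d3 u l r i x := by
          rw [hadj, Finset.mul_sum]
          refine Finset.sum_congr rfl fun i _ => ?_
          rw [Finset.mul_sum]
          refine Finset.sum_congr rfl fun r _ => ?_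
          rw [Matrix.smul_apply, smul_eq_mul]
          ring
  have hv : ∑ p, v p * (Pi.single l 1 : Fin n → ℝ) p = v l := by
    rw [Finset.sum_eq_single l]
    · simp
    · intro b _ hb; simp [Pi.single_apply, hb]
    · simp
  have hξ : ∀ q, fderiv ℝ (pd q u) x (Pi.single l 1) = hessian u x l q := fun q => rfl
  rw [hL1] at hval
  simp only [hξ, hv, hexpfx] at hval
  have hval2 : (hessian u x).det * (∑ i, ∑ r, (hessian u x)⁻¹ i r * d3 u l r i x)
      = (hessian u x).det * (-(v l) + ∑ q, hessian u x l q * ξ q) := by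
    rw [hval]
    congr 2
    exact Finset.sum_congr rfl fun q _ => mul_comm _ _
  exact mul_left_cancel₀ (ne_of_gt hdetpos) hval2

theorem laplacian_formula {n : ℕ} (hn : 1 ≤ n) (N : Set (Fin n → ℝ)) (hNopen : IsOpen N)
    (hNne : N.Nonempty) (u : (Fin n → ℝ) → ℝ) (hu : ContDiffOn ℝ (⊤ : ℕ∞) u N)
    (hpos : ∀ x ∈ N, (hessian u x).PosDef)
    (v ξ : Fin n → ℝ) (c : ℝ) (hMA : MAeq u N v ξ c) :
    ∀ φ : (Fin n → ℝ) → ℝ, ContDiffOn ℝ (⊤ : ℕ∞) φ N →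
      ∀ x ∈ N,
        laplacian u φ x = (∑ p, ∑ q, ginv u x p q * pd p (pd q φ) x)
          - (1/2) * (∑ p, ξ p * pd p φ x)
          + (1/2) * ∑ p, ∑ q, ginv u x p q * v p * pd q φ x := by
  intro φ hφ x hx
  have hu' : ∀ y ∈ N, ContDiffAt ℝ (⊤ : ℕ∞) u y := fun y hy => hu.contDiffAt (hNopen.mem_nhds hy)
  have hux : ContDiffAt ℝ (⊤ : ℕ∞) u x := hu' x hx
  -- third derivative symmetries at x
  have sout : ∀ a b c : Fin n, d3 u a b c x = d3 u b a c x := fun a b c =>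
    pd_comm (contDiffAt_pd hux c) a b
  have sin : ∀ a b c : Fin n, d3 u a b c x = d3 u a c b x := by
    intro a b c
    refine pd_congr ?_ a
    filter_upwards [hNopen.mem_nhds hx] with y hy
    exact pd_comm (hu' y hy) b c
  have sflip : ∀ a b c : Fin n, d3 u a b c x = d3 u c b a x := fun a b c => by
    rw [sin a b c, sout a c b, sin c a b]
  -- symmetry of the hessian and its inverse
  have hGsymm : (hessian u x).transpose = hessian u x := by
    ext a b
    rw [Matrix.transpose_apply]
    exact pd_comm hux b a
  have hGisymm : ∀ a b : Fin n, (hessian u x)⁻¹ a b = (hessian u x)⁻¹ b a := by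
    intro a b
    have h1 : ((hessian u x)⁻¹).transpose = (hessian u x)⁻¹ := by
      rw [Matrix.transpose_nonsing_inv, hGsymm]
    exact congrFun (congrFun h1.symm a) b
  have hdet : IsUnit (hessian u x).det :=
    isUnit_iff_ne_zero.mpr (ne_of_gt (hpos x hx).det_pos)
  have hinvmul : ∀ k q : Fin n,
      (∑ l, (hessian u x)⁻¹ k l * hessian u x l q) = if k = q then 1 else 0 := by
    intro k q
    have h2 := congrFun (congrFun (Matrix.nonsing_inv_mul (hessian u x) hdet) k) q
    rw [Matrix.mul_apply] at h2
    rw [h2, Matrix.one_apply]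
  have hw : ∀ l, ∑ i, ∑ r, (hessian u x)⁻¹ i r * d3 u l r i x
      = -(v l) + ∑ q, hessian u x l q * ξ q := jacobi hNopen hu hpos hMA hx
  -- the contracted symmetrized third-derivative sum
  have hS : ∀ l, ∑ i, ∑ j, (hessian u x)⁻¹ i j *
      (d3 u i j l x + d3 u j i l x - d3 u l i j x)
      = -(v l) + ∑ q, hessian u x l q * ξ q := by
    intro l
    have e1 : ∑ i, ∑ j, (hessian u x)⁻¹ i j * d3 u i j l x
        = -(v l) + ∑ q, hessian u x l q * ξ q := by
      rw [← hw l]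
      exact Finset.sum_congr rfl fun i _ => Finset.sum_congr rfl fun j _ => by
        rw [sflip i j l]
    have e2 : ∑ i, ∑ j, (hessian u x)⁻¹ i j * d3 u j i l x
        = -(v l) + ∑ q, hessian u x l q * ξ q := by
      rw [← hw l]
      exact Finset.sum_congr rfl fun i _ => Finset.sum_congr rfl fun j _ => by
        rw [sflip j i l, sin l i j]
    have e3 : ∑ i, ∑ j, (hessian u x)⁻¹ i j * d3 u l i j x
        = -(v l) + ∑ q, hessian u x l q * ξ q := by
      rw [← hw l]
      exact Finset.sum_congr rfl fun i _ => Finset.sum_congr rfl fun j _ => by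
        rw [sin l i j]
    calc ∑ i, ∑ j, (hessian u x)⁻¹ i j *
        (d3 u i j l x + d3 u j i l x - d3 u l i j x)
        = (∑ i, ∑ j, (hessian u x)⁻¹ i j * d3 u i j l x)
          + (∑ i, ∑ j, (hessian u x)⁻¹ i j * d3 u j i l x)
          - (∑ i, ∑ j, (hessian u x)⁻¹ i j * d3 u l i j x) := by
          simp only [mul_add, mul_sub, Finset.sum_add_distrib, Finset.sum_sub_distrib]
      _ = -(v l) + ∑ q, hessian u x l q * ξ q := by rw [e1, e2, e3]; ring
  -- the Christoffel contraction
  simp only [laplacian, covHess, Christoffel, ginv]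
  have hB : ∑ i, ∑ j, (hessian u x)⁻¹ i j *
      ∑ k, ((1/2 : ℝ) * ∑ l, (hessian u x)⁻¹ k l *
        (d3 u i j l x + d3 u j i l x - d3 u l i j x)) * pd k φ x
      = (1/2) * (∑ p, ξ p * pd p φ x)
        - (1/2) * ∑ p, ∑ q, (hessian u x)⁻¹ p q * v p * pd q φ x := by
    calc ∑ i, ∑ j, (hessian u x)⁻¹ i j *
        ∑ k, ((1/2 : ℝ) * ∑ l, (hessian u x)⁻¹ k l *
          (d3 u i j l x + d3 u j i l x - d3 u l i j x)) * pd k φ x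
        = ∑ i, ∑ j, ∑ k, ∑ l, (1/2 : ℝ) * (hessian u x)⁻¹ k l * pd k φ x *
            ((hessian u x)⁻¹ i j * (d3 u i j l x + d3 u j i l x - d3 u l i j x)) := by
          refine Finset.sum_congr rfl fun i _ => Finset.sum_congr rfl fun j _ => ?_
          rw [Finset.mul_sum]
          refine Finset.sum_congr rfl fun k _ => ?_
          simp only [Finset.sum_mul, Finset.mul_sum]
          exact Finset.sum_congr rfl fun l _ => by ring
      _ = ∑ k, ∑ l, ∑ i, ∑ j, (1/2 : ℝ) * (hessian u x)⁻¹ k l * pd k φ x *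
            ((hessian u x)⁻¹ i j * (d3 u i j l x + d3 u j i l x - d3 u l i j x)) :=
          sum4_comm _
      _ = ∑ k, ∑ l, (1/2 : ℝ) * (hessian u x)⁻¹ k l * pd k φ x *
            (-(v l) + ∑ q, hessian u x l q * ξ q) := by
          refine Finset.sum_congr rfl fun k _ => Finset.sum_congr rfl fun l _ => ?_
          rw [← hS l, Finset.mul_sum]
          exact Finset.sum_congr rfl fun i _ => by rw [Finset.mul_sum]
      _ = ∑ k, ((1/2 : ℝ) * ξ k * pd k φ x
            - (1/2) * pd k φ x * ∑ l, (hessian u x)⁻¹ k l * v l) := by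
          refine Finset.sum_congr rfl fun k _ => ?_
          have hsplit : ∀ l, (1/2 : ℝ) * (hessian u x)⁻¹ k l * pd k φ x *
              (-(v l) + ∑ q, hessian u x l q * ξ q)
              = (∑ q, (1/2 : ℝ) * pd k φ x * ξ q * ((hessian u x)⁻¹ k l * hessian u x l q))
                - (1/2) * pd k φ x * ((hessian u x)⁻¹ k l * v l) := by
            intro l
            rw [mul_add, Finset.mul_sum]
            rw [sub_eq_add_neg, add_comm]
            congr 1
            · exact Finset.sum_congr rfl fun q _ => by ring
            · ring
          rw [Finset.sum_congr rfl fun l _ => hsplit l]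
          rw [Finset.sum_sub_distrib, ← Finset.mul_sum, Finset.sum_comm]
          have hq : ∀ q, ∑ l, (1/2 : ℝ) * pd k φ x * ξ q *
              ((hessian u x)⁻¹ k l * hessian u x l q)
              = (1/2 : ℝ) * pd k φ x * ξ q * (if k = q then 1 else 0) := by
            intro q
            rw [← Finset.mul_sum, hinvmul k q]
          rw [Finset.sum_congr rfl fun q _ => hq q]
          simp only [mul_ite, mul_one, mul_zero, Finset.sum_ite_eq, Finset.mem_univ, if_true]
          ring
      _ = (1/2) * (∑ p, ξ p * pd p φ x)
          - (1/2) * ∑ p, ∑ q, (hessian u x)⁻¹ p q * v p * pd q φ x := by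
          rw [Finset.sum_sub_distrib]
          congr 1
          · rw [Finset.mul_sum]
            exact Finset.sum_congr rfl fun p _ => by ring
          · have hxch : ∑ p, ∑ q, (hessian u x)⁻¹ p q * v p * pd q φ x
                = ∑ k, ∑ l, (hessian u x)⁻¹ k l * v l * pd k φ x := by
              rw [Finset.sum_comm]
              exact Finset.sum_congr rfl fun k _ => Finset.sum_congr rfl fun l _ => by
                rw [hGisymm l k]
            rw [hxch, Finset.mul_sum]
            refine Finset.sum_congr rfl fun k _ => ?_
            rw [Finset.mul_sum, Finset.mul_sum]
            exact Finset.sum_congr rfl fun l _ => by ring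
  calc ∑ i, ∑ j, (hessian u x)⁻¹ i j * (pd i (pd j φ) x -
        ∑ k, ((1/2 : ℝ) * ∑ l, (hessian u x)⁻¹ k l *
          (d3 u i j l x + d3 u j i l x - d3 u l i j x)) * pd k φ x)
      = (∑ i, ∑ j, (hessian u x)⁻¹ i j * pd i (pd j φ) x)
        - ∑ i, ∑ j, (hessian u x)⁻¹ i j *
          ∑ k, ((1/2 : ℝ) * ∑ l, (hessian u x)⁻¹ k l *
            (d3 u i j l x + d3 u j i l x - d3 u l i j x)) * pd k φ x := by
        simp only [mul_sub, Finset.sum_sub_distrib]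
    _ = _ := by rw [hB]; ring


end KRS
end
end
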